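/- arXiv:2211.15361 — 2 statements merged into one kernel-verified Lean document; each statement's English description precedes it below -/
import Mathlib

section
/- If A is an n×n Hermitian positive definite matrix and B is an n×n Hermitian positive semidefinite matrix whose diagonal entries are all strictly positive, then the Hadamard (entrywise) product A ⊙ B is positive definite. -/
/-!
A positive definite `A` dominates `r • 1` for some `r > 0`. Writing `A = (A - r • 1) + r • 1`,
the Schur product theorem makes `(A - r • 1) ⊙ B` positive semidefinite, while
`(r • 1) ⊙ B = r • diagonal B.diag` is positive definite because the diagonal of `B` is positive.
-/

open Matrix
open scoped ComplexOrder

namespace Matrix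

variable {ι 𝕜 : Type*} [Fintype ι] [DecidableEq ι] [RCLike 𝕜]

open scoped MatrixOrder in
theorem PosDef.exists_pos_posSemidef_sub_smul_one [Nonempty ι] {A : Matrix ι ι 𝕜}
    (hA : A.PosDef) : ∃ r : ℝ, 0 < r ∧ (A - r • 1).PosSemidef := by
  have hA' := hA.isStrictlyPositive
  obtain ⟨r, hr, hle⟩ := (CFC.exists_pos_algebraMap_le_iff hA'.isSelfAdjoint).2
    fun x hx => hA'.spectrum_pos hx
  exact ⟨r, hr, le_iff.1 <| by rwa [Algebra.algebraMap_eq_smul_one] at hle⟩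

theorem PosDef.hadamard_posSemidef {A B : Matrix ι ι 𝕜} (hA : A.PosDef) (hB : B.PosSemidef)
    (hdiag : ∀ i, B i i ≠ 0) : (A ⊙ B).PosDef := by
  cases isEmpty_or_nonempty ι
  · exact ⟨hA.isHermitian.hadamard hB.isHermitian, fun x hx => (hx (Subsingleton.elim x 0)).elim⟩
  obtain ⟨r, hr, hAr⟩ := hA.exists_pos_posSemidef_sub_smul_one
  have hdiagB : (diagonal B.diag).PosDef :=
    posDef_diagonal_iff.2 fun i => hB.diag_nonneg.lt_of_ne' (hdiag i)
  have hsplit : A ⊙ B = (A - r • 1) ⊙ B + r • diagonal B.diag := by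
    rw [← one_hadamard, ← smul_hadamard, ← add_hadamard, sub_add_cancel]
  rw [hsplit]
  exact PosDef.posSemidef_add (hAr.hadamard hB) (hdiagB.smul hr)

end Matrix

theorem stmt1 (n : ℕ) (A B : Matrix (Fin n) (Fin n) ℂ)
    (hA : A.PosDef) (hB : B.PosSemidef) (hdiag : ∀ i, 0 < (B i i).re) :
    (Matrix.hadamard A B).PosDef :=
  hA.hadamard_posSemidef hB fun i hi => (hdiag i).ne' (by rw [hi, Complex.zero_re])
end

section
/- Let f_1,...,f_K ∈ [0,1) be distinct with K < N, let A be the N×K Vandermonde matrix of sinusoids a(f_k), A' the matrix of their derivatives, and let Φ ∈ ℂ^{K×L} have full row rank. Then the (L+1)K × LN matrix obtained by stacking I_L ⊗ Aᴴ on top of (Φᵀ * A')ᴴ has full row rank (L+1)K, where ⊗ is the Kronecker product and * is the Khatri–Rao product. -/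
/-!
Put `zₖ = e^{2πi fₖ}`; these are distinct because the `fₖ` lie in `[0, 1)`. Up to complex
conjugation the rows are `e_l ⊗ a(f_k)` and `φ_k ⊗ a'(f_k)`, with `a(f_k)_n = z_kⁿ` and
`a'(f_k)_n = 2πi n z_kⁿ`. Pairing with the coefficients of `p = ∏ₖ (X - zₖ)`, of degree `K < N`,
sends `a(f_k)` to `p(z_k) = 0` and `(n z_jⁿ)_n` to `z_j p'(z_j) ≠ 0`, so `a'(f_j)` is not in the
span of the `a(f_k)`. In a vanishing combination with coefficients `c_k` on the second block, a
functional `ℓ` that kills every `a(f_k)` turns block `l` into `∑ₖ c_k ℓ(a'(f_k)) Φ_{k,l} = 0`;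
the rows of `Φ` being independent and `ℓ(a'(f_j)) ≠ 0` for a suitable `ℓ`, `c_j = 0`. What
remains is a combination of the independent Vandermonde rows `a(f_k)`.
-/

open Matrix Complex
open scoped Kronecker

/-- The complex sinusoid vector `a(f) ∈ ℂ^N`, entries `e^{2πi j f}` for `j = 0,…,N-1`. -/
noncomputable def sinusoid (N : ℕ) (f : ℝ) : Fin N → ℂ :=
  fun j => Complex.exp (2 * Real.pi * Complex.I * (j : ℕ) * (f : ℂ))

/-- The entrywise derivative `a'(f)`, entries `2πi j e^{2πi j f}`. -/
noncomputable def sinusoidDeriv (N : ℕ) (f : ℝ) : Fin N → ℂ :=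
  fun j => 2 * Real.pi * Complex.I * (j : ℕ) *
    Complex.exp (2 * Real.pi * Complex.I * (j : ℕ) * (f : ℂ))

/-- Khatri–Rao (column-wise Kronecker) product. -/
def khatriRao {n q K : ℕ} (A : Matrix (Fin n) (Fin K) ℂ) (B : Matrix (Fin q) (Fin K) ℂ) :
    Matrix (Fin n × Fin q) (Fin K) ℂ :=
  fun p k => A p.1 k * B p.2 k

open Real Polynomial Submodule Set Function

section PolynomialPairing

variable {R : Type*} [CommRing R] {N : ℕ} {p : R[X]}

theorem Polynomial.sum_fin_coeff_mul_pow (hp : p.natDegree < N) (x : R) :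
    ∑ n : Fin N, p.coeff n * x ^ (n : ℕ) = p.eval x := by
  rw [eval_eq_sum_range' hp, Fin.sum_univ_eq_sum_range (fun n => p.coeff n * x ^ n)]

theorem Polynomial.sum_fin_coeff_mul_nat_mul_pow (hp : p.natDegree < N) (x : R) :
    ∑ n : Fin N, p.coeff n * ((n : R) * x ^ (n : ℕ)) = x * p.derivative.eval x := by
  rw [derivative_eval, p.sum_over_range' (by simp) N hp, Finset.mul_sum,
    ← Fin.sum_univ_eq_sum_range (fun n => x * (p.coeff n * n * x ^ (n - 1))) N]
  refine Finset.sum_congr rfl fun n _ => ?_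
  rcases n with ⟨_ | m, _⟩
  · simp
  · simp only [Nat.add_sub_cancel, pow_succ']
    push_cast
    ring

end PolynomialPairing

section Vandermonde

variable {F : Type*} [Field F] {K N : ℕ} {z : Fin K → F}

theorem linearIndependent_pow_of_injective (hKN : K ≤ N) (hz : Injective z) :
    LinearIndependent F fun k (n : Fin N) => z k ^ (n : ℕ) :=
  LinearIndependent.of_comp (LinearMap.funLeft F F (Fin.castLE hKN))
    (Matrix.linearIndependent_rows_of_det_ne_zero (Matrix.det_vandermonde_ne_zero_iff.mpr hz))

theorem nat_mul_pow_notMem_span_pow (hKN : K < N) (hz : Injective z) {j : Fin K}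
    (hzj : z j ≠ 0) :
    (fun n : Fin N => (n : F) * z j ^ (n : ℕ)) ∉
      span F (range fun k (n : Fin N) => z k ^ (n : ℕ)) := by
  classical
  set p := Lagrange.nodal Finset.univ z
  have hp : p.natDegree < N := by simpa [p, Lagrange.natDegree_nodal] using hKN
  let ℓ : (Fin N → F) →ₗ[F] F := ∑ n : Fin N, p.coeff n • LinearMap.proj n
  have hℓ : ∀ v, ℓ v = ∑ n : Fin N, p.coeff n * v n := fun v => by simp [ℓ]
  have hspan : span F (range fun k (n : Fin N) => z k ^ (n : ℕ)) ≤ LinearMap.ker ℓ := by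
    refine span_le.mpr (range_subset_iff.mpr fun k => ?_)
    simp only [SetLike.mem_coe, LinearMap.mem_ker, hℓ, p.sum_fin_coeff_mul_pow hp]
    exact Lagrange.eval_nodal_at_node (Finset.mem_univ k)
  intro hmem
  have h0 := LinearMap.mem_ker.mp (hspan hmem)
  rw [hℓ, p.sum_fin_coeff_mul_nat_mul_pow hp,
    Lagrange.eval_nodal_derivative_eval_node_eq (Finset.mem_univ j)] at h0
  refine mul_ne_zero hzj (Lagrange.eval_nodal_not_at_node fun k hk => ?_) h0
  exact fun h => (Finset.ne_of_mem_erase hk) (hz h).symm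

end Vandermonde

theorem LinearIndependent.star {R M ι : Type*} [CommSemiring R] [StarRing R] [AddCommMonoid M]
    [Module R M] [StarAddMonoid M] [StarModule R M] {v : ι → M} (hv : LinearIndependent R v) :
    LinearIndependent R (star ∘ v) :=
  hv.map_of_injective_injectiveₛ (Star.star : R → R) (starAddEquiv : M ≃+ M).toAddMonoidHom
    star_injective star_injective fun r m => by simp [star_smul]

theorem linearIndependent_sumElim_single_smul {F V ι κ : Type*} [Field F] [AddCommGroup V]
    [Module F V] [Fintype ι] [DecidableEq ι] [Fintype κ] {b d : κ → V}
    (hb : LinearIndependent F b) (hd : ∀ k, d k ∉ span F (range b)) {ψ : κ → ι → F}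
    (hψ : LinearIndependent F ψ) :
    LinearIndependent F
      (Sum.elim (fun p : ι × κ => Pi.single p.1 (b p.2)) fun k l => ψ k l • d k) := by
  rw [Fintype.linearIndependent_iff]
  intro g hg
  have hrow : ∀ l, ∑ k, g (.inl (l, k)) • b k + ∑ k, (g (.inr k) * ψ k l) • d k = 0 := by
    intro l
    simpa [Fintype.sum_sum_type, Fintype.sum_prod_type, Pi.single_apply, mul_smul] using
      congrFun hg l
  have hinr : ∀ j, g (.inr j) = 0 := by
    intro j
    obtain ⟨ℓ, hℓd, hℓb⟩ := exists_le_ker_of_notMem (hd j)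
    have hℓ : ∀ k, ℓ (b k) = 0 := fun k => hℓb (subset_span (mem_range_self k))
    have hcomb : ∑ k, (g (.inr k) * ℓ (d k)) • ψ k = 0 := by
      ext l
      simpa [hℓ, mul_right_comm] using congrArg ℓ (hrow l)
    exact (mul_eq_zero.mp (Fintype.linearIndependent_iff.mp hψ _ hcomb j)).resolve_right hℓd
  have hinl : ∀ l k, g (.inl (l, k)) = 0 := fun l =>
    Fintype.linearIndependent_iff.mp hb _ (by simpa [hinr] using hrow l)
  rintro (⟨l, k⟩ | k)
  exacts [hinl l k, hinr k]

theorem injOn_cexp_two_pi_I_mul : InjOn (fun x : ℝ => cexp (2 * π * I * x)) (Ico 0 1) := by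
  intro x hx y hy h
  obtain ⟨m, hm⟩ := Complex.exp_eq_exp_iff_exists_int.mp h
  have hxy : x = y + m := by
    have : (x : ℂ) = y + m := mul_left_cancel₀ two_pi_I_ne_zero (hm.trans (by ring))
    exact_mod_cast this
  have hm1 : m < 1 := by exact_mod_cast (by linarith [hx.2, hy.1] : (m : ℝ) < 1)
  have hm2 : -1 < m := by exact_mod_cast (by linarith [hx.1, hy.2] : (-1 : ℝ) < m)
  obtain rfl : m = 0 := by omega
  simpa using hxy

theorem sinusoid_eq_pow (N : ℕ) (f : ℝ) :
    sinusoid N f = fun n : Fin N => cexp (2 * π * I * f) ^ (n : ℕ) := by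
  ext n
  rw [sinusoid, ← Complex.exp_nat_mul]
  ring_nf

theorem sinusoidDeriv_eq_smul (N : ℕ) (f : ℝ) :
    sinusoidDeriv N f =
      (2 * π * I) • fun n : Fin N => ((n : ℕ) : ℂ) * cexp (2 * π * I * f) ^ (n : ℕ) := by
  ext n
  simp only [sinusoidDeriv, Pi.smul_apply, smul_eq_mul, ← congrFun (sinusoid_eq_pow N f) n,
    sinusoid]
  ring

section Sinusoid

variable {K N : ℕ} {f : Fin K → ℝ}

theorem linearIndependent_sinusoid (hKN : K ≤ N)
    (hf : Injective fun k => cexp (2 * π * I * f k)) :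
    LinearIndependent ℂ fun k => sinusoid N (f k) := by
  simpa only [sinusoid_eq_pow] using linearIndependent_pow_of_injective hKN hf

theorem sinusoidDeriv_notMem_span_sinusoid (hKN : K < N)
    (hf : Injective fun k => cexp (2 * π * I * f k)) (j : Fin K) :
    sinusoidDeriv N (f j) ∉ span ℂ (range fun k => sinusoid N (f k)) := by
  rw [sinusoidDeriv_eq_smul, smul_mem_iff _ two_pi_I_ne_zero]
  simpa only [sinusoid_eq_pow] using nat_mul_pow_notMem_span_pow hKN hf (Complex.exp_ne_zero _)

end Sinusoid

theorem fromRows_one_kronecker_conjTranspose_khatriRao {N K L : ℕ}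
    (A A' : Matrix (Fin N) (Fin K) ℂ) (Φ : Matrix (Fin K) (Fin L) ℂ) :
    Matrix.fromRows ((1 : Matrix (Fin L) (Fin L) ℂ) ⊗ₖ Aᴴ) (khatriRao Φᵀ A')ᴴ =
      star ∘ (LinearEquiv.curry ℂ ℂ (Fin L) (Fin N)).symm ∘
        Sum.elim (fun p : Fin L × Fin K => Pi.single p.1 (Aᵀ p.2))
          fun k l => Φ k l • A'ᵀ k := by
  ext (⟨l, k⟩ | k) ⟨l', n⟩
  · obtain rfl | h := eq_or_ne l l'
    · simp
    · simp [h, h.symm]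
  · simp [khatriRao]

theorem stmt11_general (N K L : ℕ) (hKN : K < N)
    (f : Fin K → ℝ) (hf : ∀ k, f k ∈ Set.Ico (0 : ℝ) 1) (hinj : Function.Injective f)
    (A A' : Matrix (Fin N) (Fin K) ℂ)
    (hA : ∀ j k, A j k = sinusoid N (f k) j)
    (hA' : ∀ j k, A' j k = sinusoidDeriv N (f k) j)
    (Φ : Matrix (Fin K) (Fin L) ℂ) (hΦ : LinearIndependent ℂ (fun k : Fin K => Φ k)) :
    LinearIndependent ℂ
      (Matrix.fromRows ((1 : Matrix (Fin L) (Fin L) ℂ) ⊗ₖ Aᴴ) (khatriRao Φᵀ A')ᴴ) := by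
  have hfreq : Injective fun k => cexp (2 * π * I * f k) := fun k k' h =>
    hinj (injOn_cexp_two_pi_I_mul (hf k) (hf k') h)
  have hAT : Aᵀ = fun k => sinusoid N (f k) := funext₂ fun k n => hA n k
  have hA'T : A'ᵀ = fun k => sinusoidDeriv N (f k) := funext₂ fun k n => hA' n k
  rw [fromRows_one_kronecker_conjTranspose_khatriRao, hAT, hA'T]
  exact ((linearIndependent_sumElim_single_smul (linearIndependent_sinusoid hKN.le hfreq)
    (sinusoidDeriv_notMem_span_sinusoid hKN hfreq) hΦ).map' _ (LinearEquiv.ker _)).star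

theorem stmt11 (N K L : ℕ) (hKN : K < N) (hdim : (L + 1) * K ≤ L * N)
    (f : Fin K → ℝ) (hf : ∀ k, f k ∈ Set.Ico (0 : ℝ) 1) (hinj : Function.Injective f)
    (A A' : Matrix (Fin N) (Fin K) ℂ)
    (hA : ∀ j k, A j k = sinusoid N (f k) j)
    (hA' : ∀ j k, A' j k = sinusoidDeriv N (f k) j)
    (Φ : Matrix (Fin K) (Fin L) ℂ) (hΦ : LinearIndependent ℂ (fun k : Fin K => Φ k)) :
    LinearIndependent ℂ
      (Matrix.fromRows ((1 : Matrix (Fin L) (Fin L) ℂ) ⊗ₖ Aᴴ) (khatriRao Φᵀ A')ᴴ) :=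
  stmt11_general N K L hKN f hf hinj A A' hA hA' Φ hΦ
end
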